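/- arXiv:2009.08181 — 8 statements merged into one kernel-verified Lean document; each statement's English description precedes it below -/
import Mathlib

section
/- Define a sequence a_1 = 1 and a_n = 1/(1 + (n-1)·a_{n-1}) for n ≥ 2. Then the sequence (n·a_n) is weakly increasing: n·a_n ≤ (n+1)·a_{n+1} for all n ≥ 1; equivalently a_n ≤ ((n+1)/n)·a_{n+1}. -/
/-!
Put `b n = n * a n`, so that `b (n + 1) = (n + 1) / (1 + b n)`. The invariant
`n ≤ b n * (1 + b n) ≤ n + 1` holds at `n = 1` and is carried over by this recursion.
Its upper half says exactly `b n ≤ (n + 1) / (1 + b n) = b (n + 1)`.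
-/

lemma mul_one_add_bounds_div_one_add {n b : ℝ} (hn : 0 ≤ n) (hb : 0 ≤ b)
    (hlo : n ≤ b * (1 + b)) (hhi : b * (1 + b) ≤ n + 1) :
    let c := (n + 1) / (1 + b)
    0 ≤ c ∧ n + 1 ≤ c * (1 + c) ∧ c * (1 + c) ≤ n + 1 + 1 := by
  intro c
  have hc : c * (1 + b) = n + 1 := div_mul_cancel₀ _ (by positivity)
  have hc0 : 0 ≤ c := by positivity
  refine ⟨hc0, ?_, ?_⟩
  · nlinarith [mul_nonneg hc0 hb]
  · nlinarith [mul_nonneg hc0 hb]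

section

variable {a : ℕ → ℝ}

lemma succ_mul_eq_div (hrec : ∀ n, 2 ≤ n → a n = 1 / (1 + ((n : ℝ) - 1) * a (n - 1)))
    {n : ℕ} (hn : 1 ≤ n) :
    ((n + 1 : ℕ) : ℝ) * a (n + 1) = (n + 1) / (1 + n * a n) := by
  rw [hrec (n + 1) (by omega), mul_one_div]
  push_cast
  ring_nf

lemma mul_one_add_bounds (h1 : a 1 = 1)
    (hrec : ∀ n, 2 ≤ n → a n = 1 / (1 + ((n : ℝ) - 1) * a (n - 1))) {n : ℕ} (hn : 1 ≤ n) :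
    0 ≤ n * a n ∧ n ≤ n * a n * (1 + n * a n) ∧ n * a n * (1 + n * a n) ≤ n + 1 := by
  induction n, hn using Nat.le_induction with
  | base => norm_num [h1]
  | succ n hn ih =>
    rw [succ_mul_eq_div hrec hn]
    push_cast
    exact mul_one_add_bounds_div_one_add n.cast_nonneg ih.1 ih.2.1 ih.2.2

end

/-- For the sequence `a 1 = 1`, `a n = 1 / (1 + (n-1) * a (n-1))` for `n ≥ 2`,
the sequence `n * a n` is weakly increasing. -/
theorem stmt1 (a : ℕ → ℝ) (h1 : a 1 = 1)
    (hrec : ∀ n, 2 ≤ n → a n = 1 / (1 + ((n : ℝ) - 1) * a (n - 1))) :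
    ∀ n : ℕ, 1 ≤ n → (n : ℝ) * a n ≤ ((n : ℕ) + 1 : ℝ) * a (n + 1) := by
  intro n hn
  obtain ⟨hb, -, hhi⟩ := mul_one_add_bounds h1 hrec hn
  have hsucc := succ_mul_eq_div hrec hn
  push_cast at hsucc
  rw [hsucc, le_div_iff₀ (by positivity)]
  exact hhi
end

section
/- Define an array of natural numbers M(n,l) for n, l ≥ 0 by: M(n,n) = 1 for all n ≥ 0; M(n,l) = 0 for l > n; M(1,0) = 1; M(n,0) = M(n-1,0) + M(n-1,1) for n ≥ 1; and M(n,l) = M(n-1,l-1) + M(n-1,l) + (l+1)·M(n-1,l+1) for n ≥ 1 and 1 ≤ l ≤ n-1. Then M(n+l, l) = C(n+l, l) · M(n,0) for all l ≥ 1 and n ≥ 0, where C(n+l,l) is the binomial coefficient. -/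
/-- For the rook-Brauer array `M`, we have `M (n+l) l = C(n+l, l) * M n 0`
for all `l ≥ 1` and `n ≥ 0`. -/
theorem stmt4 (M : ℕ → ℕ → ℕ)
    (hdiag : ∀ n, M n n = 1)
    (hzero : ∀ n l, n < l → M n l = 0)
    (h10 : M 1 0 = 1)
    (hrec0 : ∀ n, 1 ≤ n → M n 0 = M (n - 1) 0 + M (n - 1) 1)
    (hrec : ∀ n l, 1 ≤ n → 1 ≤ l → l ≤ n - 1 →
      M n l = M (n - 1) (l - 1) + M (n - 1) l + (l + 1) * M (n - 1) (l + 1)) :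
    ∀ l n, 1 ≤ l → M (n + l) l = Nat.choose (n + l) l * M n 0 := by
  have key : ∀ N n l, 2 * n + l = N → M (n + l) l = Nat.choose (n + l) l * M n 0 := by
    intro N
    induction N using Nat.strong_induction_on with
    | _ N ih =>
      intro n l hN
      match n, l with
      | 0, l =>
          simp [hdiag l, hdiag 0, Nat.choose_self]
      | n, 0 =>
          simp
      | 1, l' + 1 =>
          have hr := hrec (l' + 2) (l' + 1) (by omega) (by omega) (by omega)
          simp only [show l' + 2 - 1 = l' + 1 from rfl,
            show l' + 1 - 1 = l' from rfl] at hr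
          have h1 : M (l' + 1) l' = Nat.choose (l' + 1) l' * M 1 0 := by
            have := ih (2 * 1 + l') (by omega) 1 l' rfl
            simpa [Nat.add_comm] using this
          have h2 : M (l' + 1) (l' + 1) = 1 := hdiag _
          have h3 : M (l' + 1) (l' + 2) = 0 := hzero _ _ (by omega)
          have hgoal : M (l' + 2) (l' + 1) = Nat.choose (l' + 2) (l' + 1) * M 1 0 := by
            rw [hr, h1, h2, h3, h10]
            have : Nat.choose (l' + 2) (l' + 1)
                = Nat.choose (l' + 1) l' + Nat.choose (l' + 1) (l' + 1) :=
              Nat.choose_succ_succ (l' + 1) l'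
            rw [this, Nat.choose_self]
            ring
          simpa [show 1 + (l' + 1) = l' + 2 by ring] using hgoal
      | n' + 2, l' + 1 =>
          have hr := hrec (n' + l' + 3) (l' + 1) (by omega) (by omega) (by omega)
          simp only [show n' + l' + 3 - 1 = n' + l' + 2 from rfl,
            show l' + 1 - 1 = l' from rfl] at hr
          have h1 : M (n' + l' + 2) l' = Nat.choose (n' + l' + 2) l' * M (n' + 2) 0 := by
            have := ih (2 * (n' + 2) + l') (by omega) (n' + 2) l' rfl
            simpa [show n' + 2 + l' = n' + l' + 2 by ring] using this
          have h2 : M (n' + l' + 2) (l' + 1)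
              = Nat.choose (n' + l' + 2) (l' + 1) * M (n' + 1) 0 := by
            have := ih (2 * (n' + 1) + (l' + 1)) (by omega) (n' + 1) (l' + 1) rfl
            simpa [show n' + 1 + (l' + 1) = n' + l' + 2 by ring] using this
          have h3 : M (n' + l' + 2) (l' + 2)
              = Nat.choose (n' + l' + 2) (l' + 2) * M n' 0 := by
            have := ih (2 * n' + (l' + 2)) (by omega) n' (l' + 2) rfl
            simpa [show n' + (l' + 2) = n' + l' + 2 by ring] using this
          have h4 : M (n' + 1) 1 = (n' + 1) * M n' 0 := by
            have := ih (2 * n' + 1) (by omega) n' 1 rfl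
            have hc1 : Nat.choose (n' + 1) 1 = n' + 1 := by
              simp [Nat.choose_one_right]
            rw [this, hc1]
          have h5 : M (n' + 2) 0 = M (n' + 1) 0 + (n' + 1) * M n' 0 := by
            have := hrec0 (n' + 2) (by omega)
            simp only [show n' + 2 - 1 = n' + 1 from rfl] at this
            rw [this, h4]
          -- key binomial identity
          have hc : (l' + 2) * Nat.choose (n' + l' + 2) (l' + 2)
              = (n' + 1) * Nat.choose (n' + l' + 2) (l' + 1) := by
            have := Nat.choose_succ_right_eq (n' + l' + 2) (l' + 1)
            have hsub : n' + l' + 2 - (l' + 1) = n' + 1 := by omega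
            rw [hsub] at this
            rw [mul_comm (l' + 2), mul_comm (n' + 1)]
            exact this
          have hpascal : Nat.choose (n' + l' + 3) (l' + 1)
              = Nat.choose (n' + l' + 2) l' + Nat.choose (n' + l' + 2) (l' + 1) := by
            have := Nat.choose_succ_succ (n' + l' + 2) l'
            simpa using this
          have hgoal : M (n' + l' + 3) (l' + 1)
              = Nat.choose (n' + l' + 3) (l' + 1) * M (n' + 2) 0 := by
            rw [hr, h1, h2, h3, h5, hpascal]
            have : (l' + 1 + 1) * (Nat.choose (n' + l' + 2) (l' + 2) * M n' 0)
                = (n' + 1) * Nat.choose (n' + l' + 2) (l' + 1) * M n' 0 := by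
              rw [← mul_assoc, show l' + 1 + 1 = l' + 2 from rfl, hc]
            rw [this]
            ring
          simpa [show n' + 2 + (l' + 1) = n' + l' + 3 by ring] using hgoal
  intro l n _
  exact key (2 * n + l) n l rfl
end

section
/- Define M(n,l) as above by the rook-Brauer recursion. Then M(n,0) satisfies the two-term recursion M(0,0) = M(1,0) = 1 and M(n,0) = M(n-1,0) + (n-1)·M(n-2,0) for n > 1. -/
private def iva : ℕ → ℕ
  | 0 => 1
  | 1 => 1
  | (n+2) => iva (n+1) + (n+1) * iva n

private lemma iva_succ : ∀ n, iva (n + 1) = iva n + n * iva (n - 1)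
  | 0 => by simp [iva]
  | (n+1) => by simp [iva]

/-- For the rook-Brauer array `M`, the diagonal entries `M n 0` satisfy the
two-term involution-number recursion. -/
theorem stmt5 (M : ℕ → ℕ → ℕ)
    (hdiag : ∀ n, M n n = 1)
    (hzero : ∀ n l, n < l → M n l = 0)
    (h10 : M 1 0 = 1)
    (hrec0 : ∀ n, 1 ≤ n → M n 0 = M (n - 1) 0 + M (n - 1) 1)
    (hrec : ∀ n l, 1 ≤ n → 1 ≤ l → l ≤ n - 1 →
      M n l = M (n - 1) (l - 1) + M (n - 1) l + (l + 1) * M (n - 1) (l + 1)) :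
    M 0 0 = 1 ∧ M 1 0 = 1 ∧
      ∀ n, 2 ≤ n → M n 0 = M (n - 1) 0 + (n - 1) * M (n - 2) 0 := by
  have h00 : M 0 0 = 1 := by
    have h := hrec0 1 (by norm_num)
    have h01 : M 0 1 = 0 := hzero 0 1 (by norm_num)
    simp [h10, h01] at h
    omega
  have key : ∀ n l, M n l = n.choose l * iva (n - l) := by
    intro n
    induction n with
    | zero =>
      intro l
      match l with
      | 0 => simpa [iva] using h00
      | (m+1) => simp [hzero 0 (m+1) (by omega)]
    | succ n ih =>
      intro l
      match l with
      | 0 =>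
        have h := hrec0 (n+1) (by omega)
        simp only [Nat.add_sub_cancel] at h
        rw [h, ih 0, ih 1, Nat.choose_one_right]
        simp [iva_succ n]
      | (m+1) =>
        rcases lt_trichotomy (m+1) (n+1) with hlt | heq | hgt
        · have hle : m + 1 ≤ n := by omega
          have h := hrec (n+1) (m+1) (by omega) (by omega) (by omega)
          simp only [Nat.add_sub_cancel] at h
          rw [h, ih m, ih (m+1), ih (m+2)]
          set k := n - (m+1) with hk
          have h1 : n - m = k + 1 := by omega
          have h2 : n + 1 - (m + 1) = k + 1 := by omega
          have h3 : n - (m+2) = k - 1 := by omega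
          rw [h1, h2, h3, iva_succ k,
            Nat.choose_succ_succ' n m]
          have h4 : n.choose (m+2) * (m+2) = n.choose (m+1) * (n - (m+1)) :=
            Nat.choose_succ_right_eq n (m+1)
          rw [← hk] at h4
          nlinarith [h4]
        · rw [← heq, hdiag (m+1)]
          simp [iva]
        · rw [hzero (n+1) (m+1) (by omega), Nat.choose_eq_zero_of_lt (by omega)]
          simp
  refine ⟨h00, h10, fun n hn => ?_⟩
  rw [key n 0, key (n-1) 0, key (n-2) 0]
  simp only [Nat.sub_zero, Nat.choose_zero_right, one_mul]
  obtain ⟨m, rfl⟩ : ∃ m, n = m + 2 := ⟨n - 2, by omega⟩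
  simp [iva]
end

section
/- Let dim_Θ(λ,μ) be defined for pairs of Young diagrams (λ,μ) with 2|λ| + |μ| = n by dim_Θ(∅,∅) = 1 and the recursion dim_Θ(λ,μ) = Σ_{η = λ−□, ν = μ+□} dim_Θ(η,ν) + Σ_{ν = μ−□} dim_Θ(λ,ν). Then dim_Θ(λ,μ) = (1/2^{|λ|}) · (|μ|+2|λ|)!/(|λ|!·|μ|!) · f^λ · f^μ, where f^λ denotes the number of standard Young tableaux of shape λ. -/
/-!
The Young lattice is a differential poset: a diagram has exactly one more upper cover than lower
covers (addable rows are row `0` and the rows just below the removable ones), and two distinct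
diagrams of the same size have a common upper cover iff they have a common lower cover, namely
their join and meet. Hence `∑_{ν ⋗ μ} ∑_{ρ ⋖ ν} g ρ = ∑_{η ⋖ μ} ∑_{ρ ⋗ η} g ρ + g μ`, which for
the tableau count `f` gives `∑_{ν ⋗ μ} f ν = (|μ| + 1) f μ` by induction on `|μ|`.

With this identity the candidate `C(|λ|, |μ|) f λ f μ`, where `C(a, b) = (b + 2a)! / (2^a a! b!)`,
satisfies the recursion of `dimΘ`; this comes down to
`C(a + 1, b + 1) = (b + 2) C(a, b + 2) + C(a + 1, b)` and `C(a + 1, 0) = C(a, 1)`. A solution of the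
recursion is determined by its value at `(∅, ∅)`, by induction on `2|λ| + |μ|`.
-/

open Finset

namespace YoungDiagram

variable {μ ν ρ η : YoungDiagram}

theorem card_lt_card (h : μ < ν) : μ.card < ν.card :=
  Finset.card_lt_card (cells_ssubset_iff.mpr h)

theorem eq_of_le_of_card_le (h : μ ≤ ν) (hc : ν.card ≤ μ.card) : μ = ν :=
  YoungDiagram.ext (eq_of_subset_of_card_le (cells_subset_iff.mpr h) hc)

theorem card_eq_zero_iff : μ.card = 0 ↔ μ = ⊥ := by
  rw [YoungDiagram.card, Finset.card_eq_zero, ← cells_bot, YoungDiagram.ext_iff]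

theorem card_sup_add_card_inf (μ ν : YoungDiagram) :
    (μ ⊔ ν).card + (μ ⊓ ν).card = μ.card + ν.card := by
  have := card_union_add_card_inter μ.cells ν.cells
  rwa [← cells_sup, ← cells_inf] at this

theorem rowLen_pos_iff {i : ℕ} : 0 < μ.rowLen i ↔ i < μ.colLen 0 := by
  rw [← mem_iff_lt_colLen, mem_iff_lt_rowLen]

theorem sup_eq_of_le_of_card (hμ : μ ≤ ν) (hρ : ρ ≤ ν) (hne : μ ≠ ρ) (hcard : μ.card = ρ.card)
    (hν : ν.card = μ.card + 1) : μ ⊔ ρ = ν := by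
  have hlt : μ < μ ⊔ ρ := by
    refine lt_of_le_of_ne le_sup_left fun h => hne ?_
    exact (eq_of_le_of_card_le (h ▸ le_sup_right) hcard.le).symm
  exact eq_of_le_of_card_le (sup_le hμ hρ) (by have := card_lt_card hlt; omega)

theorem inf_eq_of_le_of_card (hμ : η ≤ μ) (hρ : η ≤ ρ) (hne : μ ≠ ρ) (hcard : μ.card = ρ.card)
    (hη : μ.card = η.card + 1) : μ ⊓ ρ = η := by
  have hlt : μ ⊓ ρ < μ := by
    refine lt_of_le_of_ne inf_le_left fun h => hne ?_
    exact eq_of_le_of_card_le (h ▸ inf_le_right) hcard.ge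
  exact (eq_of_le_of_card_le (le_inf hμ hρ) (by have := card_lt_card hlt; omega)).symm

def addToRow (μ : YoungDiagram) (i : ℕ) (h : i = 0 ∨ μ.rowLen i < μ.rowLen (i - 1)) :
    YoungDiagram where
  cells := insert (i, μ.rowLen i) μ.cells
  isLowerSet := by
    rintro ⟨a, b⟩ ⟨c, d⟩ hle hab
    obtain ⟨hca, hdb⟩ := Prod.mk_le_mk.mp hle
    simp only [coe_insert, Set.mem_insert_iff, mem_coe, mem_cells, Prod.mk.injEq,
      mem_iff_lt_rowLen] at hab ⊢
    rcases hab with ⟨rfl, rfl⟩ | hab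
    · rcases hca.eq_or_lt with rfl | hca
      · omega
      · have := μ.rowLen_anti c (a - 1) (by omega)
        omega
    · exact Or.inr (hdb.trans_lt (hab.trans_le (μ.rowLen_anti _ _ hca)))

def removeFromRow (μ : YoungDiagram) (i : ℕ) (h : μ.rowLen (i + 1) < μ.rowLen i) :
    YoungDiagram where
  cells := μ.cells.erase (i, μ.rowLen i - 1)
  isLowerSet := by
    rintro ⟨a, b⟩ ⟨c, d⟩ hle hab
    obtain ⟨hca, hdb⟩ := Prod.mk_le_mk.mp hle
    simp only [coe_erase, Set.mem_sdiff, mem_coe, mem_cells, Set.mem_singleton_iff,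
      Prod.mk.injEq, mem_iff_lt_rowLen] at hab ⊢
    refine ⟨hdb.trans_lt (hab.1.trans_le (μ.rowLen_anti _ _ hca)), ?_⟩
    rintro ⟨rfl, rfl⟩
    rcases hca.eq_or_lt with rfl | hca
    · omega
    · have := μ.rowLen_anti (c + 1) a hca
      omega

variable {i : ℕ}

theorem mem_addToRow {h} {x : ℕ × ℕ} : x ∈ μ.addToRow i h ↔ x = (i, μ.rowLen i) ∨ x ∈ μ :=
  mem_insert

theorem mem_removeFromRow {h} {x : ℕ × ℕ} :
    x ∈ μ.removeFromRow i h ↔ x ≠ (i, μ.rowLen i - 1) ∧ x ∈ μ :=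
  mem_erase

theorem rowLen_notMem (μ : YoungDiagram) (i : ℕ) : (i, μ.rowLen i) ∉ μ := by
  simp [mem_iff_lt_rowLen]

theorem le_addToRow (h) : μ ≤ μ.addToRow i h := fun _ hx => mem_addToRow.mpr (Or.inr hx)

theorem card_addToRow (h) : (μ.addToRow i h).card = μ.card + 1 :=
  card_insert_of_notMem (μ.rowLen_notMem i)

theorem removeFromRow_le (h) : μ.removeFromRow i h ≤ μ := fun _ hx => (mem_removeFromRow.mp hx).2

theorem card_removeFromRow (h : μ.rowLen (i + 1) < μ.rowLen i) :
    (μ.removeFromRow i h).card + 1 = μ.card :=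
  card_erase_add_one (mem_iff_lt_rowLen.mpr (by omega))

theorem addToRow_inj {i' : ℕ} {h h'} (he : μ.addToRow i h = μ.addToRow i' h') : i = i' := by
  have : (i, μ.rowLen i) ∈ μ.addToRow i' h' := he ▸ mem_addToRow.mpr (Or.inl rfl)
  rcases mem_addToRow.mp this with he | he
  · exact (Prod.ext_iff.mp he).1
  · exact absurd he (μ.rowLen_notMem i)

theorem removeFromRow_inj {i' : ℕ} {h h'} (he : μ.removeFromRow i h = μ.removeFromRow i' h') :
    i = i' := by
  by_contra hne
  have : (i, μ.rowLen i - 1) ∈ μ.removeFromRow i' h' :=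
    mem_removeFromRow.mpr ⟨fun he => hne (Prod.ext_iff.mp he).1, mem_iff_lt_rowLen.mpr (by omega)⟩
  exact (mem_removeFromRow.mp (he ▸ this)).1 rfl

theorem exists_addToRow_eq (hle : μ ≤ ν) (hc : ν.card = μ.card + 1) :
    ∃ i h, μ.addToRow i h = ν := by
  obtain ⟨⟨i, j⟩, hnot, hins⟩ := exists_eq_insert_iff.mpr ⟨cells_subset_iff.mpr hle, hc.symm⟩
  have mem_ν : ∀ {x}, x ∈ ν ↔ x = (i, j) ∨ x ∈ μ := by
    intro x; rw [← mem_cells, ← hins, mem_insert, mem_cells]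
  have hij : (i, j) ∈ ν := mem_ν.mpr (Or.inl rfl)
  have hj : j = μ.rowLen i := by
    have : (i, μ.rowLen i) ∈ ν := ν.up_left_mem le_rfl (by simpa [mem_iff_lt_rowLen] using hnot) hij
    rcases mem_ν.mp this with h | h
    · exact (Prod.ext_iff.mp h).2.symm
    · exact absurd h (μ.rowLen_notMem i)
  subst hj
  have h : i = 0 ∨ μ.rowLen i < μ.rowLen (i - 1) := by
    refine or_iff_not_imp_left.mpr fun hi => ?_
    have : (i - 1, μ.rowLen i) ∈ ν := ν.up_left_mem (Nat.sub_le i 1) le_rfl hij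
    rcases mem_ν.mp this with h | h
    · exact absurd (Prod.ext_iff.mp h).1 (by omega)
    · exact mem_iff_lt_rowLen.mp h
  exact ⟨i, h, YoungDiagram.ext hins⟩

theorem exists_removeFromRow_eq (hle : η ≤ μ) (hc : μ.card = η.card + 1) :
    ∃ i h, μ.removeFromRow i h = η := by
  obtain ⟨⟨i, j⟩, hnot, hins⟩ := exists_eq_insert_iff.mpr ⟨cells_subset_iff.mpr hle, hc.symm⟩
  have mem_μ : ∀ {x}, x ∈ μ ↔ x = (i, j) ∨ x ∈ η := by
    intro x; rw [← mem_cells, ← hins, mem_insert, mem_cells]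
  have hij : j < μ.rowLen i := mem_iff_lt_rowLen.mp (mem_μ.mpr (Or.inl rfl))
  have notMem_of_le : ∀ {x}, (i, j) ≤ x → x ≠ (i, j) → x ∉ μ := fun hx hne hmem =>
    hnot (η.isLowerSet hx ((mem_μ.mp hmem).resolve_left hne))
  have hj : j = μ.rowLen i - 1 := by
    have := notMem_of_le (x := (i, j + 1)) ⟨le_rfl, by simp⟩ (by simp)
    rw [mem_iff_lt_rowLen] at this
    omega
  have h : μ.rowLen (i + 1) < μ.rowLen i := by
    have := notMem_of_le (x := (i + 1, j)) ⟨by simp, le_rfl⟩ (by simp)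
    rw [mem_iff_lt_rowLen] at this
    omega
  refine ⟨i, h, YoungDiagram.ext ?_⟩
  change μ.cells.erase _ = _
  rw [← hj, ← hins, erase_insert hnot]

theorem card_bot : (⊥ : YoungDiagram).card = 0 := card_eq_zero_iff.mpr rfl

def IsUpperCoverMap (above : YoungDiagram → Finset YoungDiagram) : Prop :=
  ∀ μ ν, ν ∈ above μ ↔ μ ≤ ν ∧ ν.card = μ.card + 1

def IsLowerCoverMap (below : YoungDiagram → Finset YoungDiagram) : Prop :=
  ∀ ν μ, μ ∈ below ν ↔ μ ≤ ν ∧ ν.card = μ.card + 1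

variable {below above : YoungDiagram → Finset YoungDiagram}

theorem ne_bot_of_mem_above (habove : IsUpperCoverMap above) (hν : ν ∈ above μ) : ν ≠ ⊥ := by
  rintro rfl
  simpa [card_bot] using ((habove _ _).mp hν).2

theorem below_bot (hbelow : IsLowerCoverMap below) : below ⊥ = ∅ :=
  eq_empty_of_forall_notMem fun _ h => by simpa [card_bot] using ((hbelow _ _).mp h).2

theorem card_above (habove : IsUpperCoverMap above) (μ : YoungDiagram) :
    #(above μ) = #{i ∈ range (μ.colLen 0 + 1) | i = 0 ∨ μ.rowLen i < μ.rowLen (i - 1)} := by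
  refine (card_bij (fun i hi => μ.addToRow i (mem_filter.mp hi).2)
    (fun i _ => (habove _ _).mpr ⟨le_addToRow _, card_addToRow _⟩)
    (fun _ _ _ _ he => addToRow_inj he) fun ν hν => ?_).symm
  obtain ⟨i, h, rfl⟩ := exists_addToRow_eq ((habove _ _).mp hν).1 ((habove _ _).mp hν).2
  refine ⟨i, mem_filter.mpr ⟨mem_range.mpr ?_, h⟩, rfl⟩
  rcases h with h | h
  · omega
  · have := rowLen_pos_iff.mp (Nat.zero_lt_of_lt h)
    omega

theorem card_below (hbelow : IsLowerCoverMap below) (μ : YoungDiagram) :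
    #(below μ) = #{i ∈ range (μ.colLen 0) | μ.rowLen (i + 1) < μ.rowLen i} := by
  refine (card_bij (fun i hi => μ.removeFromRow i (mem_filter.mp hi).2)
    (fun i _ => (hbelow _ _).mpr ⟨removeFromRow_le _, (card_removeFromRow _).symm⟩)
    (fun _ _ _ _ he => removeFromRow_inj he) fun η hη => ?_).symm
  obtain ⟨i, h, rfl⟩ := exists_removeFromRow_eq ((hbelow _ _).mp hη).1 ((hbelow _ _).mp hη).2
  exact ⟨i, mem_filter.mpr ⟨mem_range.mpr (rowLen_pos_iff.mp (Nat.zero_lt_of_lt h)), h⟩, rfl⟩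

theorem card_above_eq_card_below_add_one (hbelow : IsLowerCoverMap below)
    (habove : IsUpperCoverMap above) (μ : YoungDiagram) : #(above μ) = #(below μ) + 1 := by
  rw [card_above habove, card_below hbelow, range_add_one', filter_insert, if_pos (Or.inl rfl),
    card_insert_of_notMem (by simp), filter_map, card_map]
  congr 2
  exact filter_congr fun i _ => by simp; rfl

theorem sum_above_sum_below_eq {M : Type*} [AddCommMonoid M] (hbelow : IsLowerCoverMap below)
    (habove : IsUpperCoverMap above) (g : YoungDiagram → M) (m : YoungDiagram) :
    ∑ ν ∈ above m, ∑ ρ ∈ below ν, g ρ = ∑ η ∈ below m, ∑ ρ ∈ above η, g ρ + g m := by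
  classical
  have hup : ∀ ν ∈ above m, ∑ ρ ∈ below ν, g ρ = g m + ∑ ρ ∈ (below ν).erase m, g ρ :=
    fun ν hν => (add_sum_erase _ _ ((hbelow _ _).mpr ((habove _ _).mp hν))).symm
  have hdown : ∀ η ∈ below m, ∑ ρ ∈ above η, g ρ = g m + ∑ ρ ∈ (above η).erase m, g ρ :=
    fun η hη => (add_sum_erase _ _ ((habove _ _).mpr ((hbelow _ _).mp hη))).symm
  have hoff : ∑ ν ∈ above m, ∑ ρ ∈ (below ν).erase m, g ρ
      = ∑ η ∈ below m, ∑ ρ ∈ (above η).erase m, g ρ := by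
    rw [sum_sigma', sum_sigma']
    refine sum_nbij' (fun x => ⟨m ⊓ x.2, x.2⟩) (fun x => ⟨m ⊔ x.2, x.2⟩) ?_ ?_ ?_ ?_
      fun _ _ => rfl
    all_goals
      rintro ⟨ν, ρ⟩ hx
      simp only [mem_sigma, mem_erase, habove _ _, hbelow _ _] at hx ⊢
      obtain ⟨⟨hle, hc⟩, hne, hle', hc'⟩ := hx
    · have hsup := sup_eq_of_le_of_card hle hle' (Ne.symm hne) (by omega) hc
      have := card_sup_add_card_inf m ρ
      rw [hsup] at this
      exact ⟨⟨inf_le_left, by omega⟩, hne, inf_le_right, by omega⟩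
    · have hinf := inf_eq_of_le_of_card hle hle' (Ne.symm hne) (by omega) hc
      have := card_sup_add_card_inf m ρ
      rw [hinf] at this
      exact ⟨⟨le_sup_left, by omega⟩, hne, le_sup_right, by omega⟩
    · rw [sup_eq_of_le_of_card hle hle' (Ne.symm hne) (by omega) hc]
    · rw [inf_eq_of_le_of_card hle hle' (Ne.symm hne) (by omega) hc]
  rw [sum_congr rfl hup, sum_congr rfl hdown, sum_add_distrib, sum_add_distrib, hoff, sum_const,
    sum_const, card_above_eq_card_below_add_one hbelow habove, succ_nsmul]
  abel

theorem sum_above_eq_card_add_one_mul (hbelow : IsLowerCoverMap below)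
    (habove : IsUpperCoverMap above) {f : YoungDiagram → ℕ} (hf : ∀ ν, ν ≠ ⊥ → f ν = ∑ μ ∈ below ν, f μ) (m : YoungDiagram) :
    ∑ ν ∈ above m, f ν = (m.card + 1) * f m := by
  induction hn : m.card using Nat.strong_induction_on generalizing m with
  | _ n ih =>
  have hη : ∀ η ∈ below m, ∑ ρ ∈ above η, f ρ = n * f η := fun η hη => by
    have := ((hbelow _ _).mp hη).2
    rw [ih η.card (by omega) η rfl]
    congr 1
    omega
  rw [sum_congr rfl fun ν hν => hf ν (ne_bot_of_mem_above habove hν),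
    sum_above_sum_below_eq hbelow habove, sum_congr rfl hη, ← mul_sum]
  rcases eq_or_ne m ⊥ with rfl | hm
  · simp [← hn, card_bot]
  · rw [← hf m hm]
    ring

end YoungDiagram

open scoped Nat

noncomputable def coupledCoeff (a b : ℕ) : ℚ :=
  1 / 2 ^ a * ((b + 2 * a)! / (a ! * b !))

theorem coupledCoeff_zero_left (b : ℕ) : coupledCoeff 0 b = 1 := by
  simp [coupledCoeff, Nat.factorial_ne_zero]

theorem coupledCoeff_succ_zero (a : ℕ) : coupledCoeff (a + 1) 0 = coupledCoeff a 1 := by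
  simp only [coupledCoeff, show 0 + 2 * (a + 1) = (1 + 2 * a) + 1 by ring, Nat.factorial_succ,
    Nat.factorial_zero]
  push_cast
  field_simp
  ring

theorem coupledCoeff_succ_succ (a b : ℕ) :
    coupledCoeff (a + 1) (b + 1) = (b + 2) * coupledCoeff a (b + 2) + coupledCoeff (a + 1) b := by
  simp only [coupledCoeff, show b + 1 + 2 * (a + 1) = (b + 2 * a + 2) + 1 by ring,
    show b + 2 + 2 * a = b + 2 * a + 2 by ring, show b + 2 * (a + 1) = b + 2 * a + 2 by ring,
    Nat.factorial_succ]
  push_cast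
  field_simp
  ring

def CoupledYoungRecursion {M : Type*} [AddCommMonoid M]
    (below above : YoungDiagram → Finset YoungDiagram)
    (g : YoungDiagram → YoungDiagram → M) : Prop :=
  ∀ l m : YoungDiagram, ¬(l = ⊥ ∧ m = ⊥) →
    g l m = ∑ η ∈ below l, ∑ ν ∈ above m, g η ν + ∑ ν ∈ below m, g l ν

open YoungDiagram

variable {below above : YoungDiagram → Finset YoungDiagram}

theorem CoupledYoungRecursion.unique {M : Type*} [AddCommMonoid M] (hbelow : IsLowerCoverMap below)
    (habove : IsUpperCoverMap above) {g g' : YoungDiagram → YoungDiagram → M}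
    (hg : CoupledYoungRecursion below above g) (hg' : CoupledYoungRecursion below above g')
    (h0 : g ⊥ ⊥ = g' ⊥ ⊥) : g = g' := by
  suffices ∀ n l m, 2 * l.card + m.card = n → g l m = g' l m from
    funext fun l => funext fun m => this _ l m rfl
  intro n
  induction n using Nat.strong_induction_on with
  | _ n ih =>
  intro l m hn
  by_cases hlm : l = ⊥ ∧ m = ⊥
  · rw [hlm.1, hlm.2, h0]
  rw [hg l m hlm, hg' l m hlm]
  congr 1
  · refine sum_congr rfl fun η hη => sum_congr rfl fun ν hν => ih _ ?_ η ν rfl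
    have := ((hbelow _ _).mp hη).2
    have := ((habove _ _).mp hν).2
    omega
  · refine sum_congr rfl fun ν hν => ih _ ?_ l ν rfl
    have := ((hbelow _ _).mp hν).2
    omega

theorem coupledYoungRecursion_coupledCoeff (hbelow : IsLowerCoverMap below)
    (habove : IsUpperCoverMap above) {f : YoungDiagram → ℕ}
    (hf : ∀ ν, ν ≠ ⊥ → f ν = ∑ μ ∈ below ν, f μ) :
    CoupledYoungRecursion below above fun l m => coupledCoeff l.card m.card * f l * f m := by
  intro l m hlm
  have hf' : ∀ ν, ν ≠ ⊥ → ∑ μ ∈ below ν, (f μ : ℚ) = f ν := fun ν hν => by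
    exact_mod_cast (hf ν hν).symm
  have hup : ∑ ν ∈ above m, (f ν : ℚ) = (m.card + 1) * f m := by
    exact_mod_cast sum_above_eq_card_add_one_mul hbelow habove hf m
  have h1 : ∑ η ∈ below l, ∑ ν ∈ above m, coupledCoeff η.card ν.card * f η * f ν
      = coupledCoeff (l.card - 1) (m.card + 1) * (∑ η ∈ below l, (f η : ℚ)) *
          ((m.card + 1) * f m) := by
    rw [← hup, mul_assoc, sum_mul_sum, mul_sum]
    refine sum_congr rfl fun η hη => ?_
    rw [mul_sum]
    refine sum_congr rfl fun ν hν => ?_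
    rw [show η.card = l.card - 1 by have := ((hbelow _ _).mp hη).2; omega,
      ((habove _ _).mp hν).2]
    ring
  have h2 : ∑ ν ∈ below m, coupledCoeff l.card ν.card * f l * f ν
      = coupledCoeff l.card (m.card - 1) * f l * ∑ ν ∈ below m, (f ν : ℚ) := by
    rw [mul_sum]
    refine sum_congr rfl fun ν hν => ?_
    rw [show ν.card = m.card - 1 by have := ((hbelow _ _).mp hν).2; omega]
  simp only [h1, h2]
  rcases eq_or_ne l ⊥ with rfl | hl <;> rcases eq_or_ne m ⊥ with rfl | hm
  · exact absurd ⟨rfl, rfl⟩ hlm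
  · simp [below_bot hbelow, hf' m hm, card_bot, coupledCoeff_zero_left]
  · obtain ⟨a, ha⟩ := Nat.exists_eq_add_one_of_ne_zero (card_eq_zero_iff.not.mpr hl)
    simp [below_bot hbelow, hf' l hl, card_bot, ha, coupledCoeff_succ_zero]
  · obtain ⟨a, ha⟩ := Nat.exists_eq_add_one_of_ne_zero (card_eq_zero_iff.not.mpr hl)
    obtain ⟨b, hb⟩ := Nat.exists_eq_add_one_of_ne_zero (card_eq_zero_iff.not.mpr hm)
    simp only [hf' l hl, hf' m hm, ha, hb, coupledCoeff_succ_succ, Nat.add_sub_cancel]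
    push_cast
    ring

/-- Dimension formula for the coupled Young graph: if `dimΘ` satisfies the
defining recursion of path counts on the coupled Young graph, and `f` is the
number of standard Young tableaux (path counts on the Young graph), then
`dimΘ (λ, μ) = (1/2^|λ|) * (|μ|+2|λ|)! / (|λ|! * |μ|!) * f λ * f μ`. -/
theorem stmt8
    (below above : YoungDiagram → Finset YoungDiagram)
    (hbelow : ∀ ν μ, μ ∈ below ν ↔ μ ≤ ν ∧ ν.card = μ.card + 1)
    (habove : ∀ μ ν, ν ∈ above μ ↔ μ ≤ ν ∧ ν.card = μ.card + 1)
    (f : YoungDiagram → ℕ)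
    (hf0 : f ⊥ = 1)
    (hf : ∀ ν, ν ≠ ⊥ → f ν = ∑ μ ∈ below ν, f μ)
    (dimΘ : YoungDiagram → YoungDiagram → ℕ)
    (hd0 : dimΘ ⊥ ⊥ = 1)
    (hdrec : ∀ l m : YoungDiagram, ¬(l = ⊥ ∧ m = ⊥) →
      dimΘ l m =
        (∑ η ∈ below l, ∑ ν ∈ above m, dimΘ η ν) +
          ∑ ν ∈ below m, dimΘ l ν) :
    ∀ l m : YoungDiagram,
      (dimΘ l m : ℚ) =
        (1 / 2 ^ l.card) *
            ((Nat.factorial (m.card + 2 * l.card) : ℚ) /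
              (Nat.factorial l.card * Nat.factorial m.card)) *
          (f l : ℚ) * (f m : ℚ) := by
  have hdim : CoupledYoungRecursion below above fun l m => (dimΘ l m : ℚ) := fun l m hlm => by
    dsimp only
    exact_mod_cast hdrec l m hlm
  have h := hdim.unique hbelow habove (coupledYoungRecursion_coupledCoeff hbelow habove hf)
    (by simp [hd0, hf0, card_bot, coupledCoeff_zero_left])
  exact fun l m => congrFun₂ h l m
end

section
/- Define the array K(n,k,l) for n,k,l ≥ 0 with 2k+l ≤ n and 2k+l ≡ n (mod 2) by: K(0,0,0) = 1; K(n,k,l) = (2k+l)!/(2^k·k!·l!) whenever 2k+l = n; and K(n,k,l) = K(n-1,k,l-1) + (l+1)·(K(n-1,k,l+1) + K(n-1,k-1,l+1)) + (k+1)·K(n-1,k+1,l-1) for 2k+l < n (with out-of-range terms set to 0). Then K(2n-1,0,1) = K(2n,0,0) for all n ≥ 1. -/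
/-- For the multiplicity array `K` of the pascalized coupled Young graph,
`K (2n-1) 0 1 = K (2n) 0 0` for all `n ≥ 1`. -/
theorem stmt10
    (K : ℕ → ℕ → ℕ → ℚ)
    (hdom : ∀ n k l, ¬(2 * k + l ≤ n ∧ (2 * k + l) % 2 = n % 2) → K n k l = 0)
    (h0 : K 0 0 0 = 1)
    (hdiag : ∀ n k l, 2 * k + l = n →
      K n k l = (Nat.factorial (2 * k + l) : ℚ) /
        (2 ^ k * Nat.factorial k * Nat.factorial l))
    (hrec : ∀ n k l, 1 ≤ n → 2 * k + l < n → (2 * k + l) % 2 = n % 2 →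
      K n k l = K (n - 1) k (l - 1) +
        ((l : ℚ) + 1) * (K (n - 1) k (l + 1) +
          (if k = 0 then 0 else K (n - 1) (k - 1) (l + 1))) +
        ((k : ℚ) + 1) * K (n - 1) (k + 1) (l - 1)) :
    ∀ n, 1 ≤ n → K (2 * n - 1) 0 1 = K (2 * n) 0 0 := by
  intro n hn
  have h := hrec (2 * n) 0 0 (by omega) (by omega) (by omega)
  have h1 : K (2 * n - 1) 0 0 = 0 := hdom _ _ _ (by omega)
  have h2 : K (2 * n - 1) 1 0 = 0 := hdom _ _ _ (by omega)
  norm_num at h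
  rw [h, h1, h2]
  ring
end

section
/- Define a_n for n ≥ 0 by a_0 = 1 and a_n = Σ_{j=1}^{n} C(2n-1, 2j-1) · a_{n-j}. Then a_{n-1}/a_n ≤ 1/(2n-1) for all n ≥ 1; in particular a_{n-1}/a_n → 0 as n → ∞. -/
open Filter

/-!
The `j = 1` term of the recurrence alone gives `(2n - 1) a_{n-1} ≤ a_n`, which is the ratio
bound; since `1 / (2n - 1) → 0` and the ratios are nonnegative, they tend to `0`.
-/

theorem two_mul_sub_one_mul_pred_le (a : ℕ → ℕ)
    (hrec : ∀ n, 1 ≤ n →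
      a n = ∑ j ∈ Finset.Icc 1 n, Nat.choose (2 * n - 1) (2 * j - 1) * a (n - j))
    {n : ℕ} (hn : 1 ≤ n) : (2 * n - 1) * a (n - 1) ≤ a n := by
  have hfirst := Finset.single_le_sum
    (f := fun j => Nat.choose (2 * n - 1) (2 * j - 1) * a (n - j))
    (fun _ _ => Nat.zero_le _) (Finset.mem_Icc.mpr ⟨le_rfl, hn⟩)
  simpa [Nat.choose_one_right, ← hrec n hn] using hfirst

theorem div_le_one_div_of_mul_le {K : Type*} [Field K] [LinearOrder K] [IsStrictOrderedRing K]
    {x y c : K} (hc : 0 < c) (hy : 0 ≤ y) (h : c * x ≤ y) : x / y ≤ 1 / c := by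
  rcases hy.eq_or_lt with rfl | hy
  · simpa using hc.le
  · rw [div_le_div_iff₀ hy hc]
    linarith

theorem tendsto_one_div_two_mul_sub_one :
    Tendsto (fun n : ℕ => 1 / (2 * (n : ℝ) - 1)) atTop (nhds 0) := by
  have htop : Tendsto (fun n : ℕ => 2 * (n : ℝ) - 1) atTop atTop :=
    tendsto_atTop_add_const_right _ _
      (tendsto_natCast_atTop_atTop.const_mul_atTop two_pos)
  simp only [one_div]
  exact htop.inv_tendsto_atTop

theorem stmt11_general (a : ℕ → ℕ)
    (hrec : ∀ n, 1 ≤ n →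
      a n = ∑ j ∈ Finset.Icc 1 n, Nat.choose (2 * n - 1) (2 * j - 1) * a (n - j)) :
    (∀ n, 1 ≤ n → (a (n - 1) : ℝ) / (a n : ℝ) ≤ 1 / (2 * (n : ℝ) - 1)) ∧
      Tendsto (fun n => (a (n - 1) : ℝ) / (a n : ℝ)) atTop (nhds 0) := by
  have hratio : ∀ n, 1 ≤ n → (a (n - 1) : ℝ) / (a n : ℝ) ≤ 1 / (2 * (n : ℝ) - 1) := by
    intro n hn
    have hn' : (1 : ℝ) ≤ n := by exact_mod_cast hn
    have hle : ((2 * n - 1 : ℕ) : ℝ) * a (n - 1) ≤ a n := by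
      exact_mod_cast two_mul_sub_one_mul_pred_le a hrec hn
    rw [Nat.cast_sub (by omega)] at hle
    push_cast at hle
    exact div_le_one_div_of_mul_le (by linarith) (Nat.cast_nonneg _) hle
  refine ⟨hratio, ?_⟩
  refine tendsto_of_tendsto_of_tendsto_of_le_of_le' tendsto_const_nhds
    tendsto_one_div_two_mul_sub_one (Eventually.of_forall fun n => by positivity) ?_
  filter_upwards [eventually_ge_atTop 1] with n hn using hratio n hn

/-- For the hyperoctahedral dimension sequence `a 0 = 1`,
`a n = Σ_{j=1}^n C(2n-1, 2j-1) * a (n-j)`, we have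
`a (n-1) / a n ≤ 1 / (2n-1)` for all `n ≥ 1`; in particular
`a (n-1) / a n → 0`. -/
theorem stmt11 (a : ℕ → ℕ) (h0 : a 0 = 1)
    (hrec : ∀ n, 1 ≤ n →
      a n = ∑ j ∈ Finset.Icc 1 n, Nat.choose (2 * n - 1) (2 * j - 1) * a (n - j)) :
    (∀ n, 1 ≤ n → (a (n - 1) : ℝ) / (a n : ℝ) ≤ 1 / (2 * (n : ℝ) - 1)) ∧
      Tendsto (fun n => (a (n - 1) : ℝ) / (a n : ℝ)) atTop (nhds 0) :=
  stmt11_general a hrec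
end

section
/- Let Θ be the coupled Young graph. For vertices (λ,μ) at level m and (λ̃,μ̃) at level n > m, the number of paths in Θ from (λ,μ) to (λ̃,μ̃) equals dim_Y(λ; λ̃) · dim_{P(Y)}(μ; μ̃), i.e., the number of paths from λ to λ̃ in the Young graph times the number of lazy-free walks from μ to μ̃ of length n−m on the Young graph using only ±□ steps. -/
open scoped Classical
open Finset

/-- Path counts in the coupled Young graph `Θ` factorize: the number of paths
of length `s ≥ 1` from `(λ,μ)` to `(λ',μ')` equals the number of paths from
`λ` to `λ'` in the Young graph times the number of length-`s` walks from `μ`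
to `μ'` on the Young graph using only `±□` steps (the pascalized Young graph). -/
theorem stmt12
    (below above : YoungDiagram → Finset YoungDiagram)
    (hbelow : ∀ ν μ, μ ∈ below ν ↔ μ ≤ ν ∧ ν.card = μ.card + 1)
    (habove : ∀ μ ν, ν ∈ above μ ↔ μ ≤ ν ∧ ν.card = μ.card + 1)
    -- `dimY l t` : number of increasing-by-one-box chains from `l` to `t` in the Young graph
    (dimY : YoungDiagram → YoungDiagram → ℕ)
    (hY0 : ∀ l t : YoungDiagram, t.card ≤ l.card → dimY l t = if l = t then 1 else 0)
    (hYrec : ∀ l t : YoungDiagram, l.card < t.card → dimY l t = ∑ η ∈ below t, dimY l η)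
    -- `dimPY s m t` : number of length-`s` walks from `m` to `t` with `±□` steps
    (dimPY : ℕ → YoungDiagram → YoungDiagram → ℕ)
    (hPY0 : ∀ m t : YoungDiagram, dimPY 0 m t = if m = t then 1 else 0)
    (hPYrec : ∀ s (m t : YoungDiagram), dimPY (s + 1) m t =
      (∑ ν ∈ below t, dimPY s m ν) + ∑ ν ∈ above t, dimPY s m ν)
    -- `dimΘP s (l,m) (lt,mt)` : number of length-`s` paths in the coupled Young graph
    (dimΘP : ℕ → YoungDiagram × YoungDiagram → YoungDiagram × YoungDiagram → ℕ)
    (hΘ0 : ∀ v t : YoungDiagram × YoungDiagram, dimΘP 0 v t = if v = t then 1 else 0)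
    (hΘrec : ∀ s (v t : YoungDiagram × YoungDiagram), dimΘP (s + 1) v t =
      (∑ ν ∈ below t.2, dimΘP s v (t.1, ν)) +
        ∑ η ∈ below t.1, ∑ ν ∈ above t.2, dimΘP s v (η, ν)) :
    ∀ (s : ℕ) (l m lt mt : YoungDiagram), 1 ≤ s →
      2 * lt.card + mt.card = 2 * l.card + m.card + s →
      dimΘP s (l, m) (lt, mt) = dimY l lt * dimPY s m mt := by
  have hPYzero : ∀ s (m t : YoungDiagram), m.card + s < t.card → dimPY s m t = 0 := by
    intro s
    induction s with
    | zero =>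
      intro m t h
      rw [hPY0, if_neg]
      intro he; subst he; omega
    | succ s ih =>
      intro m t h
      rw [hPYrec]
      have h1 : ∑ ν ∈ below t, dimPY s m ν = 0 := by
        apply Finset.sum_eq_zero
        intro ν hν
        have := (hbelow t ν).mp hν
        exact ih m ν (by omega)
      have h2 : ∑ ν ∈ above t, dimPY s m ν = 0 := by
        apply Finset.sum_eq_zero
        intro ν hν
        have := (habove t ν).mp hν
        exact ih m ν (by omega)
      rw [h1, h2]
  have key : ∀ (s : ℕ) (l m lt mt : YoungDiagram),
      2 * lt.card + mt.card = 2 * l.card + m.card + s →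
      dimΘP s (l, m) (lt, mt) = dimY l lt * dimPY s m mt := by
    intro s
    induction s with
    | zero =>
      intro l m lt mt hlev
      rw [hΘ0, hPY0]
      by_cases hm : m = mt
      · subst hm
        have hc : lt.card = l.card := by omega
        by_cases hl : l = lt
        · subst hl
          simp [hY0 l l le_rfl]
        · rw [hY0 l lt hc.le, if_neg hl, if_neg (by simp [hl]), if_pos rfl]
      · rw [if_neg hm, if_neg (by simp [hm]), mul_zero]
    | succ s ih =>
      intro l m lt mt hlev
      rw [hΘrec, hPYrec]
      dsimp only
      have hA : ∑ ν ∈ below mt, dimΘP s (l, m) (lt, ν)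
          = dimY l lt * ∑ ν ∈ below mt, dimPY s m ν := by
        rw [Finset.mul_sum]
        refine Finset.sum_congr rfl fun ν hν => ?_
        have h := (hbelow mt ν).mp hν
        exact ih l m lt ν (by omega)
      have hB : ∀ η ∈ below lt, ∑ ν ∈ above mt, dimΘP s (l, m) (η, ν)
          = dimY l η * ∑ ν ∈ above mt, dimPY s m ν := by
        intro η hη
        have h1 := (hbelow lt η).mp hη
        rw [Finset.mul_sum]
        refine Finset.sum_congr rfl fun ν hν => ?_
        have h2 := (habove mt ν).mp hν
        exact ih l m η ν (by omega)
      rw [hA, Finset.sum_congr rfl hB, ← Finset.sum_mul]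
      by_cases hcase : l.card < lt.card
      · rw [← hYrec l lt hcase]; ring
      · have hsum : ∑ η ∈ below lt, dimY l η = 0 := by
          apply Finset.sum_eq_zero
          intro η hη
          have h1 := (hbelow lt η).mp hη
          rw [hY0 l η (by omega), if_neg]
          intro he; subst he; omega
        rw [hsum, zero_mul, add_zero, mul_add]
        by_cases hl : l = lt
        · subst hl
          have hz : ∑ ν ∈ above mt, dimPY s m ν = 0 := by
            apply Finset.sum_eq_zero
            intro ν hν
            have h2 := (habove mt ν).mp hν
            exact hPYzero s m ν (by omega)
          rw [hz, mul_zero, add_zero]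
        · rw [hY0 l lt (by omega), if_neg hl]
          ring
  intro s l m lt mt _ hlev
  exact key s l m lt mt hlev
end

section
/- Define M(n,l) by the rook-Brauer recursion (M(n,n)=1, M(n,l)=0 for l>n, M(1,0)=1, M(n,0)=M(n-1,0)+M(n-1,1), M(n,l)=M(n-1,l-1)+M(n-1,l)+(l+1)·M(n-1,l+1) for 1≤l≤n-1). Then for every n ≥ 1, max over 0 ≤ l < n of M(n-1,l)/M(n,l) is attained at l = 0, i.e., M(n-1,l)·M(n,0) ≤ M(n,l)·M(n-1,0) for all 0 ≤ l < n. -/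
/-!
Unwinding the recursion gives `M n l = n.choose l * a (n - l)`, where `a = M · 0` are the
involution (telephone) numbers, `a (n + 2) = a (n + 1) + (n + 1) * a n`. Since
`k.choose l * (k + 1) = (k + 1).choose l * (k + 1 - l)`, the claim for `n = k + 1` becomes
`f (k + 1 - l) ≤ f (k + 1)` for `f n = n * a (n - 1) / a n`, i.e. the monotonicity of `f`.
That is proved jointly with the log-convexity of `a`: after substituting the recurrence,
log-convexity at `k + 1` is `f (k + 1) ≤ f (k + 2)`, and `f (k + 2) ≤ f (k + 3)` follows from
log-convexity at `k` and `a (k + 1) ≤ a (k + 2)`.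
-/

def involutionNumber : ℕ → ℕ
  | 0 => 1
  | 1 => 1
  | n + 2 => involutionNumber (n + 1) + (n + 1) * involutionNumber n

theorem involutionNumber_succ (n : ℕ) :
    involutionNumber (n + 1) = involutionNumber n + n * involutionNumber (n - 1) := by
  cases n <;> simp [involutionNumber]

theorem involutionNumber_pos (n : ℕ) : 0 < involutionNumber n := by
  induction n with
  | zero => simp [involutionNumber]
  | succ n ih => rw [involutionNumber_succ]; omega

theorem involutionNumber_mono : Monotone involutionNumber :=
  monotone_nat_of_le_succ fun n => by rw [involutionNumber_succ]; omega

theorem involutionNumber_sq_le_mul_and_mul_le_mul_sq (k : ℕ) :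
    involutionNumber (k + 1) ^ 2 ≤ involutionNumber k * involutionNumber (k + 2) ∧
      (k + 1) * (involutionNumber k * involutionNumber (k + 2)) ≤
        (k + 2) * involutionNumber (k + 1) ^ 2 := by
  induction k with
  | zero => simp [involutionNumber]
  | succ k ih =>
    obtain ⟨hconvex, hratio⟩ := ih
    have h2 : involutionNumber (k + 2) =
        involutionNumber (k + 1) + (k + 1) * involutionNumber k := rfl
    have h3 : involutionNumber (k + 3) =
        involutionNumber (k + 2) + (k + 2) * involutionNumber (k + 1) := rfl
    have hmono : involutionNumber (k + 1) ≤ involutionNumber (k + 2) :=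
      involutionNumber_mono (Nat.le_succ _)
    simp only [show k + 1 + 1 = k + 2 from rfl, show k + 1 + 2 = k + 3 from rfl, h3]
    constructor
    · nlinarith
    · have h2' := congrArg (involutionNumber (k + 2) * ·) h2
      nlinarith [Nat.mul_le_mul_left ((k + 1) * (k + 3)) hconvex,
        Nat.mul_le_mul_left (involutionNumber (k + 1)) hmono]

theorem monotone_mul_involutionNumber_pred_div :
    Monotone fun n : ℕ => (n * involutionNumber (n - 1) : ℚ) / involutionNumber n := by
  refine monotone_nat_of_le_succ fun n => ?_
  rcases n with _ | k
  · simp [involutionNumber]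
  · have hpos (m : ℕ) : (0 : ℚ) < involutionNumber m := by exact_mod_cast involutionNumber_pos m
    rw [div_le_div_iff₀ (hpos _) (hpos _)]
    have hratio := (involutionNumber_sq_le_mul_and_mul_le_mul_sq k).2
    simp only [add_tsub_cancel_right]
    push_cast
    exact_mod_cast (by nlinarith [hratio] : _)

theorem mul_involutionNumber_pred_mul_le {m n : ℕ} (hmn : m ≤ n) :
    m * involutionNumber (m - 1) * involutionNumber n ≤
      n * involutionNumber (n - 1) * involutionNumber m := by
  have h := monotone_mul_involutionNumber_pred_div hmn
  rw [div_le_div_iff₀ (by exact_mod_cast involutionNumber_pos m)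
    (by exact_mod_cast involutionNumber_pos n)] at h
  exact_mod_cast h

theorem choose_mul_involutionNumber_mul_le {k l : ℕ} (hl : l ≤ k) :
    k.choose l * involutionNumber (k - l) * involutionNumber (k + 1) ≤
      (k + 1).choose l * involutionNumber (k + 1 - l) * involutionNumber k := by
  have hratio := mul_involutionNumber_pred_mul_le (Nat.sub_le (k + 1) l)
  rw [show k + 1 - l - 1 = k - l by omega, add_tsub_cancel_right] at hratio
  refine Nat.le_of_mul_le_mul_left ?_ (show 0 < k + 1 - l by omega)
  calc (k + 1 - l) * (k.choose l * involutionNumber (k - l) * involutionNumber (k + 1))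
      = k.choose l * ((k + 1 - l) * involutionNumber (k - l) * involutionNumber (k + 1)) := by
        ring
    _ ≤ k.choose l * ((k + 1) * involutionNumber k * involutionNumber (k + 1 - l)) :=
        Nat.mul_le_mul_left _ hratio
    _ = k.choose l * (k + 1) * involutionNumber k * involutionNumber (k + 1 - l) := by ring
    _ = (k + 1 - l) * ((k + 1).choose l * involutionNumber (k + 1 - l) * involutionNumber k) := by
        rw [Nat.choose_mul_succ_eq]; ring

theorem rookBrauer_eq_choose_mul_involutionNumber (M : ℕ → ℕ → ℕ)
    (hdiag : ∀ n, M n n = 1)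
    (hzero : ∀ n l, n < l → M n l = 0)
    (hrec0 : ∀ n, 1 ≤ n → M n 0 = M (n - 1) 0 + M (n - 1) 1)
    (hrec : ∀ n l, 1 ≤ n → 1 ≤ l → l ≤ n - 1 →
      M n l = M (n - 1) (l - 1) + M (n - 1) l + (l + 1) * M (n - 1) (l + 1))
    (n l : ℕ) : M n l = n.choose l * involutionNumber (n - l) := by
  induction n generalizing l with
  | zero =>
    rcases l with _ | l
    · simp [hdiag, involutionNumber]
    · simp [hzero 0 (l + 1) (by omega)]
  | succ k ih =>
    rcases lt_trichotomy l (k + 1) with hl | rfl | hl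
    · rcases l with _ | j
      · rw [hrec0 (k + 1) le_add_self, add_tsub_cancel_right, ih, ih]
        simp [involutionNumber_succ]
      · obtain ⟨d, rfl⟩ : ∃ d, k = j + 1 + d := ⟨k - j - 1, by omega⟩
        have hchoose := Nat.choose_succ_right_eq (j + 1 + d) (j + 1)
        rw [show j + 1 + d - (j + 1) = d by omega] at hchoose
        rw [hrec (j + 1 + d + 1) (j + 1) (by omega) (by omega) (by omega), add_tsub_cancel_right,
          add_tsub_cancel_right, ih, ih, ih, Nat.choose_succ_succ',
          show j + 1 + d + 1 - (j + 1) = d + 1 by omega, show j + 1 + d - j = d + 1 by omega,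
          show j + 1 + d - (j + 1) = d by omega, show j + 1 + d - (j + 1 + 1) = d - 1 by omega,
          involutionNumber_succ]
        linear_combination involutionNumber (d - 1) * hchoose
    · simp [hdiag, involutionNumber]
    · simp [hzero _ _ hl, Nat.choose_eq_zero_of_lt hl]

theorem stmt15_general (M : ℕ → ℕ → ℕ)
    (hdiag : ∀ n, M n n = 1)
    (hzero : ∀ n l, n < l → M n l = 0)
    (hrec0 : ∀ n, 1 ≤ n → M n 0 = M (n - 1) 0 + M (n - 1) 1)
    (hrec : ∀ n l, 1 ≤ n → 1 ≤ l → l ≤ n - 1 →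
      M n l = M (n - 1) (l - 1) + M (n - 1) l + (l + 1) * M (n - 1) (l + 1)) :
    ∀ n, 1 ≤ n → ∀ l, l < n →
      M (n - 1) l * M n 0 ≤ M n l * M (n - 1) 0 := by
  intro n hn l hl
  obtain ⟨k, rfl⟩ : ∃ k, n = k + 1 := ⟨n - 1, by omega⟩
  simp only [rookBrauer_eq_choose_mul_involutionNumber M hdiag hzero hrec0 hrec,
    add_tsub_cancel_right, Nat.choose_zero_right, tsub_zero, one_mul]
  exact choose_mul_involutionNumber_mul_le (by omega)

/-- For the rook-Brauer array `M`, the maximum of `M (n-1) l / M n l` over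
`0 ≤ l < n` is attained at `l = 0`; equivalently
`M (n-1) l * M n 0 ≤ M n l * M (n-1) 0` for all `0 ≤ l < n`. -/
theorem stmt15 (M : ℕ → ℕ → ℕ)
    (hdiag : ∀ n, M n n = 1)
    (hzero : ∀ n l, n < l → M n l = 0)
    (h10 : M 1 0 = 1)
    (hrec0 : ∀ n, 1 ≤ n → M n 0 = M (n - 1) 0 + M (n - 1) 1)
    (hrec : ∀ n l, 1 ≤ n → 1 ≤ l → l ≤ n - 1 →
      M n l = M (n - 1) (l - 1) + M (n - 1) l + (l + 1) * M (n - 1) (l + 1)) :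
    ∀ n, 1 ≤ n → ∀ l, l < n →
      M (n - 1) l * M n 0 ≤ M n l * M (n - 1) 0 :=
  stmt15_general M hdiag hzero hrec0 hrec
end
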